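/- Let κ_0 < κ_1 < ⋯ < κ_n be infinite regular cardinals, let X be a T3 (regular Hausdorff) space, let p ∈ X, and suppose N(p,X) is cofinally equivalent to the coordinatewise product ∏_{i≤n} κ_i. Then for every infinite regular cardinal λ: there is an escape sequence at p of length λ if and only if there is an escape sequence at p of length λ consisting of regular open sets, if and only if λ ∈ {κ_0, …, κ_n}. -/

import Mathlib

universe u v w

/-- Two preorders are *cofinally equivalent* if there is a preorder (given here by a
reflexive transitive relation `le` on `R`) such that both are order isomorphic to
cofinal subsets of it. -/
def CofEquiv (P : Type u) (Q : Type v) [Preorder P] [Preorder Q] : Prop :=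
  ∃ (R : Type (max u v)) (le : R → R → Prop),
    Reflexive le ∧ Transitive le ∧
    ∃ (f : P → R) (g : Q → R),
      Function.Injective f ∧ Function.Injective g ∧
      (∀ a b : P, a ≤ b ↔ le (f a) (f b)) ∧
      (∀ a b : Q, a ≤ b ↔ le (g a) (g b)) ∧
      (∀ r : R, ∃ a : P, le r (f a)) ∧
      (∀ r : R, ∃ b : Q, le r (g b))

/-- The neighborhood filter of `p`, i.e. all sets whose interior contains `p`,
as a preorder under containment `⊇`. -/
def Nbhds (X : Type w) [TopologicalSpace X] (p : X) := {U : Set X // U ∈ nhds p}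

instance (X : Type w) [TopologicalSpace X] (p : X) : Preorder (Nbhds X p) where
  le U V := Subtype.val V ⊆ Subtype.val U
  le_refl _ := subset_rfl
  le_trans _ _ _ h1 h2 := Set.Subset.trans h2 h1

/-- `U` is an escape sequence at `p`: a decreasing (w.r.t. the index order) sequence
of neighborhoods of `p` whose intersection is not a neighborhood of `p`. -/
def IsEscapeSeq {X : Type w} [TopologicalSpace X] (p : X) {ι : Type u} [Preorder ι]
    (U : ι → Set X) : Prop :=
  (∀ i, U i ∈ nhds p) ∧ (∀ i j : ι, i ≤ j → U j ⊆ U i) ∧ (⋂ i, U i) ∉ nhds p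

/-!
A cofinal equivalence gives Tukey maps `N(p,X) → ∏ κ_j` and back. If the regular cardinal `λ`
is none of the `κ_j`, then along `λ` many terms of any `λ`-sequence in the product the
coordinates with `κ_j < λ` are constant (pigeonhole) and those with `κ_j > λ` are bounded
(regularity), so every monotone `λ`-sequence of neighbourhoods is bounded and does not escape.
Conversely, the points of the product that move only in coordinate `i` code `κ_i` neighbourhoods
with no common sub-neighbourhood; intersecting closed sub-neighbourhoods of them along initial
segments gives a closed escape sequence of length `κ_i`, which `interior ∘ closure ∘ interior`
makes regular open.
-/

open Cardinal Set

namespace Cardinal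

variable {c : Cardinal.{u}}

theorem IsRegular.bddAbove_of_mk_lt (hc : c.IsRegular) {s : Set c.ord.ToType} (hs : #s < c) :
    BddAbove s :=
  .of_not_isCofinal fun h ↦ (Order.cof_le h).not_gt (by rwa [Ordinal.cof_toType, hc.cof_ord])

theorem mk_Iic_ord_toType_lt (hc : ℵ₀ ≤ c) (x : c.ord.ToType) : #(Iic x) < c := by
  rw [← Iio_insert]
  exact mk_insert_le.trans_lt
    (add_lt_of_lt hc (by simpa using mk_Iio_lt x) (one_lt_aleph0.trans_le hc))

theorem not_bddAbove_of_le_mk (hc : ℵ₀ ≤ c) {s : Set c.ord.ToType} (hs : c ≤ #s) :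
    ¬BddAbove s := fun ⟨x, hx⟩ ↦
  (hs.trans (mk_le_mk_of_subset hx)).not_gt (mk_Iic_ord_toType_lt hc x)

theorem IsRegular.exists_le_mk_forall_eq {ι : Type u} {J : Type*} [Finite J] {α : J → Type u}
    (hc : c.IsRegular) (a : ι → ∀ j, α j) (hι : c ≤ #ι) :
    ∃ S : Set ι, c ≤ #S ∧ ∀ j, #(α j) < c → ∃ x, ∀ t ∈ S, a t j = x := by
  classical
  have := Fintype.ofFinite J
  suffices ∀ s : Finset J, ∃ S : Set ι, c ≤ #S ∧ ∀ j ∈ s, #(α j) < c → ∃ x, ∀ t ∈ S, a t j = x by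
    obtain ⟨S, hS, hconst⟩ := this Finset.univ
    exact ⟨S, hS, fun j ↦ hconst j (Finset.mem_univ j)⟩
  intro s
  induction s using Finset.induction_on with
  | empty => exact ⟨Set.univ, by rwa [mk_univ], by simp⟩
  | insert j s _ ih =>
    obtain ⟨S, hS, hconst⟩ := ih
    by_cases hj : #(α j) < c
    · obtain ⟨x, T, hTS, hT, hTx⟩ := infinite_pigeonhole_set (fun t : S ↦ a t j) c hS
        hc.aleph0_le (by rwa [hc.cof_ord])
      refine ⟨T, hT, fun k hk hk' ↦ ?_⟩
      rcases Finset.mem_insert.1 hk with rfl | hk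
      · exact ⟨x, fun t ht ↦ hTx ht⟩
      · obtain ⟨y, hy⟩ := hconst k hk hk'
        exact ⟨y, fun t ht ↦ hy t (hTS ht)⟩
    · refine ⟨S, hS, fun k hk hk' ↦ ?_⟩
      rcases Finset.mem_insert.1 hk with rfl | hk
      exacts [absurd hk' hj, hconst k hk hk']

theorem IsRegular.exists_le_mk_forall_bddAbove_image {ι : Type u} {J : Type*} [Finite J]
    {κ : J → Cardinal.{u}} (hκ : ∀ j, (κ j).IsRegular) (hc : c.IsRegular)
    (a : ι → ∀ j, (κ j).ord.ToType) (hι : c ≤ #ι) :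
    ∃ S : Set ι, c ≤ #S ∧
      ∀ T ⊆ S, (∀ j, c ≤ κ j → #T < κ j) → BddAbove (a '' T) := by
  obtain ⟨S, hS, hconst⟩ := hc.exists_le_mk_forall_eq a hι
  refine ⟨S, hS, fun T hTS hT ↦ bddAbove_pi.2 fun j ↦ ?_⟩
  rw [image_image]
  by_cases hj : κ j < c
  · obtain ⟨x, hx⟩ := hconst j (by rwa [mk_ord_toType])
    exact ⟨x, forall_mem_image.2 fun t ht ↦ (hx t (hTS ht)).le⟩
  · exact (hκ j).bddAbove_of_mk_lt (mk_image_le.trans_lt (hT j (not_lt.1 hj)))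

end Cardinal

/-- A Tukey map sends unbounded sets to unbounded sets. -/
def IsTukeyMap {P Q : Type*} [Preorder P] [Preorder Q] (f : P → Q) : Prop :=
  ∀ s : Set P, BddAbove (f '' s) → BddAbove s

namespace CofEquiv

variable {P : Type u} {Q : Type v} [Preorder P] [Preorder Q]

theorem symm (h : CofEquiv P Q) : CofEquiv Q P :=
  let ⟨R, le, hrefl, htrans, f, g, hf, hg, hfle, hgle, hfcof, hgcof⟩ := h
  ⟨R, le, hrefl, htrans, g, f, hg, hf, hgle, hfle, hgcof, hfcof⟩

theorem exists_isTukeyMap (h : CofEquiv P Q) : ∃ φ : P → Q, IsTukeyMap φ := by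
  obtain ⟨R, le, -, htrans, f, g, -, -, hfle, hgle, hfcof, hgcof⟩ := h
  choose φ hφ using fun x ↦ hgcof (f x)
  choose ψ hψ using fun y ↦ hfcof (g y)
  refine ⟨φ, fun s ⟨y, hy⟩ ↦ ⟨ψ y, fun x hx ↦ ?_⟩⟩
  have hxy : le (g (φ x)) (g y) := (hgle _ _).1 (hy (mem_image_of_mem φ hx))
  exact (hfle _ _).2 (htrans (hφ x) (htrans hxy (hψ y)))

end CofEquiv

theorem IsTukeyMap.exists_eq_of_not_bddAbove_range {P : Type*} [Preorder P] {J : Type*}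
    [Finite J] {κ : J → Cardinal.{u}} (hκ : ∀ j, (κ j).IsRegular)
    {φ : P → ∀ j, (κ j).ord.ToType} (hφ : IsTukeyMap φ) {c : Cardinal.{u}} (hc : c.IsRegular)
    {e : c.ord.ToType → P} (he : Monotone e) (hunb : ¬BddAbove (range e)) : ∃ j, κ j = c := by
  by_contra! hne
  obtain ⟨S, hS, hbdd⟩ := hc.exists_le_mk_forall_bddAbove_image hκ (φ ∘ e) (mk_ord_toType c).ge
  have hSκ : ∀ j, c ≤ κ j → #S < κ j := fun j hj ↦
    ((mk_set_le S).trans (mk_ord_toType c).le).trans_lt (hj.lt_of_ne (hne j).symm)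
  obtain ⟨d, hd⟩ := hφ _ (image_comp φ e S ▸ hbdd S subset_rfl hSκ)
  refine hunb ⟨d, forall_mem_range.2 fun α ↦ ?_⟩
  obtain ⟨β, hβS, hαβ⟩ := not_bddAbove_iff.1 (not_bddAbove_of_le_mk hc.aleph0_le hS) α
  exact (he hαβ.le).trans (hd (mem_image_of_mem e hβS))

section Topology

variable {X : Type w} [TopologicalSpace X] {p : X}

theorem IsEscapeSeq.exists_monotone_not_bddAbove_range {ι : Type v} [Preorder ι]
    {U : ι → Set X} (hU : IsEscapeSeq p U) :
    ∃ e : ι → Nbhds X p, Monotone e ∧ ¬BddAbove (range e) :=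
  ⟨fun i ↦ ⟨U i, hU.1 i⟩, fun _ _ hij ↦ hU.2.1 _ _ hij,
    fun ⟨d, hd⟩ ↦ hU.2.2 (Filter.mem_of_superset d.2 (subset_iInter fun i ↦ hd ⟨i, rfl⟩))⟩

theorem IsEscapeSeq.interior_closure_interior {ι : Type v} [Preorder ι] {W : ι → Set X}
    (hW : IsEscapeSeq p W) (hcl : ∀ i, IsClosed (W i)) :
    IsEscapeSeq p fun i ↦ interior (closure (interior (W i))) := by
  obtain ⟨hmem, hanti, hnot⟩ := hW
  refine ⟨fun i ↦ ?_, fun i j hij ↦ ?_, fun h ↦ hnot ?_⟩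
  · exact Filter.mem_of_superset (interior_mem_nhds.2 (hmem i))
      isOpen_interior.subset_interior_closure
  · exact interior_mono (closure_mono (interior_mono (hanti i j hij)))
  · exact Filter.mem_of_superset h
      (iInter_mono fun i ↦ interior_subset.trans (hcl i).closure_interior_subset)

theorem exists_isEscapeSeq_isClosed [RegularSpace X] {J : Type*} [Finite J]
    {κ : J → Cardinal.{u}} (hκ : ∀ j, (κ j).IsRegular)
    {φ : Nbhds X p → ∀ j, (κ j).ord.ToType} (hφ : IsTukeyMap φ)
    {ψ : (∀ j, (κ j).ord.ToType) → Nbhds X p} (hψ : IsTukeyMap ψ) (i : J) :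
    ∃ W : (κ i).ord.ToType → Set X, IsEscapeSeq p W ∧ ∀ α, IsClosed (W α) := by
  classical
  have z : ∀ j, (κ j).ord.ToType := fun j ↦ (nonempty_ord_toType (hκ j).ne_zero).some
  choose D hDmem hDcl hDsub using fun β ↦
    exists_mem_nhds_isClosed_subset (ψ (Function.update z i β)).2
  let N : (κ i).ord.ToType → Nbhds X p := fun β ↦ ⟨D β, hDmem β⟩
  obtain ⟨S, hS, hbdd⟩ :=
    (hκ i).exists_le_mk_forall_bddAbove_image hκ (φ ∘ N) (mk_ord_toType _).ge
  refine ⟨fun α ↦ ⋂ β ∈ S ∩ Iic α, D β, ⟨fun α ↦ ?_, fun α α' h ↦ ?_, fun hmem ↦ ?_⟩,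
    fun α ↦ isClosed_biInter fun β _ ↦ hDcl β⟩
  · have hT : ∀ j, κ i ≤ κ j → #(S ∩ Iic α : Set _) < κ j := fun j hj ↦
      ((mk_le_mk_of_subset inter_subset_right).trans_lt
        (mk_Iic_ord_toType_lt (hκ i).aleph0_le α)).trans_le hj
    obtain ⟨d, hd⟩ := hφ _ (image_comp φ N _ ▸ hbdd _ inter_subset_left hT)
    exact Filter.mem_of_superset d.2
      (subset_iInter₂ fun β hβ ↦ hd (mem_image_of_mem N hβ))
  · exact biInter_subset_biInter_left (inter_subset_inter_right S (Iic_subset_Iic.2 h))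
  · let a : (κ i).ord.ToType → ∀ j, (κ j).ord.ToType := Function.update z i
    have hψbdd : BddAbove (ψ '' (a '' S)) := by
      refine ⟨(⟨_, hmem⟩ : Nbhds X p), forall_mem_image.2 fun a' ha' ↦ ?_⟩
      obtain ⟨β, hβS, rfl⟩ := ha'
      have hβ : β ∈ S ∩ Iic β := ⟨hβS, self_mem_Iic⟩
      exact (iInter_subset _ β).trans ((biInter_subset_of_mem hβ).trans (hDsub β))
    obtain ⟨b, hb⟩ := hψ _ hψbdd
    refine not_bddAbove_of_le_mk (hκ i).aleph0_le hS ⟨b i, fun β hβ ↦ ?_⟩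
    simpa [a] using hb (mem_image_of_mem a hβ) i

end Topology

theorem escape_spectrum_of_rectangular_base_general {X : Type u} [TopologicalSpace X]
    [T3Space X] (p : X) (n : ℕ) (κ : Fin (n + 1) → Cardinal.{u})
    (hreg : ∀ i, (κ i).IsRegular)
    (heq : CofEquiv (Nbhds X p) (∀ i, (κ i).ord.ToType)) :
    ∀ lam : Cardinal.{u}, lam.IsRegular →
      ((∃ U : lam.ord.ToType → Set X, IsEscapeSeq p U) ↔
        (∃ U : lam.ord.ToType → Set X,
          IsEscapeSeq p U ∧ ∀ i, U i = interior (closure (U i)))) ∧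
      ((∃ U : lam.ord.ToType → Set X, IsEscapeSeq p U) ↔ ∃ i, κ i = lam) := by
  intro lam hlam
  obtain ⟨φ, hφ⟩ := heq.exists_isTukeyMap
  obtain ⟨ψ, hψ⟩ := heq.symm.exists_isTukeyMap
  have hlength : (∃ U : lam.ord.ToType → Set X, IsEscapeSeq p U) → ∃ i, κ i = lam := by
    rintro ⟨U, hU⟩
    obtain ⟨e, he, hunb⟩ := hU.exists_monotone_not_bddAbove_range
    exact hφ.exists_eq_of_not_bddAbove_range hreg hlam he hunb
  have hregular : (∃ i, κ i = lam) → ∃ U : lam.ord.ToType → Set X,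
      IsEscapeSeq p U ∧ ∀ i, U i = interior (closure (U i)) := by
    rintro ⟨i, rfl⟩
    obtain ⟨W, hW, hcl⟩ := exists_isEscapeSeq_isClosed hreg hφ hψ i
    exact ⟨_, hW.interior_closure_interior hcl, fun _ ↦ interior_closure_idem.symm⟩
  exact ⟨⟨hregular ∘ hlength, fun ⟨U, hU, _⟩ ↦ ⟨U, hU⟩⟩,
    ⟨hlength, fun h ↦ (hregular h).imp fun _ ↦ And.left⟩⟩

/-- If `κ 0 < ⋯ < κ n` are infinite regular cardinals, `X` is `T₃`,
and `N(p,X) ≡cf ∏_{i ≤ n} κ i`, then for every infinite regular cardinal `λ`: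
there is an escape sequence at `p` of length `λ` iff there is one consisting of
regular open sets, iff `λ ∈ {κ 0, …, κ n}`. -/
theorem escape_spectrum_of_rectangular_base {X : Type u} [TopologicalSpace X]
    [T3Space X] (p : X) (n : ℕ) (κ : Fin (n + 1) → Cardinal.{u})
    (hreg : ∀ i, (κ i).IsRegular) (hmono : StrictMono κ)
    (heq : CofEquiv (Nbhds X p) (∀ i, (κ i).ord.ToType)) :
    ∀ lam : Cardinal.{u}, lam.IsRegular →
      ((∃ U : lam.ord.ToType → Set X, IsEscapeSeq p U) ↔
        (∃ U : lam.ord.ToType → Set X,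
          IsEscapeSeq p U ∧ ∀ i, U i = interior (closure (U i)))) ∧
      ((∃ U : lam.ord.ToType → Set X, IsEscapeSeq p U) ↔ ∃ i, κ i = lam) :=
  escape_spectrum_of_rectangular_base_general p n κ hreg heq
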